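/- arXiv:1007.3655 — 2 statements merged into one kernel-verified Lean document; each statement's English description precedes it below -/
import Mathlib

section
/- Quantum packing bound: Let Q be a subspace of a finite-dimensional Hilbert space H with projector P_Q, and let {L_i}_{i=1}^n be linearly independent operators satisfying P_Q L_i† L_j P_Q = M_{ij} P_Q with M an invertible (nondegenerate) Hermitian n×n matrix. Then dim H ≥ n · dim Q. -/
/-! Applying `P ∘ (L k)†` to a relation `∑ j, L j (q j) = 0` with all `q j ∈ Q` gives
`∑ j, M k j • q j = 0` for every `k`, so invertibility of `M` forces `q = 0`. Hence
`q ↦ ∑ j, L j (q j)` embeds `Qⁿ` into `H`. -/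

open Finset

theorem Matrix.eq_zero_of_forall_sum_smul_eq_zero {ι R V : Type*} [Fintype ι] [DecidableEq ι]
    [CommRing R] [AddCommGroup V] [Module R V] {M : Matrix ι ι R} (hM : IsUnit M) {v : ι → V}
    (h : ∀ k, ∑ j, M k j • v j = 0) : v = 0 := by
  have hinv : M⁻¹ * M = 1 := M.nonsing_inv_mul ((M.isUnit_iff_isUnit_det).mp hM)
  funext i
  calc v i = ∑ j, (M⁻¹ * M) i j • v j := by simp [hinv, Matrix.one_apply]
    _ = ∑ k, M⁻¹ i k • ∑ j, M k j • v j := by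
      simp only [Matrix.mul_apply, sum_smul, smul_sum, mul_smul]
      exact sum_comm
    _ = 0 := by simp [h]

section Packing

variable {K V W ι : Type*} [Field K] [AddCommGroup V] [Module K V] [AddCommGroup W] [Module K W]
  [Fintype ι] [DecidableEq ι] (Q : Submodule K V) (L : ι → V →ₗ[K] W)

def packingMap : (ι → Q) →ₗ[K] W :=
  LinearMap.lsum K (fun _ => Q) K fun i => L i ∘ₗ Q.subtype

@[simp]
theorem packingMap_apply (q : ι → Q) : packingMap Q L q = ∑ i, L i (q i) := by
  simp [packingMap]

variable {Q L}

theorem packingMap_injective {R : ι → W →ₗ[K] V} {M : Matrix ι ι K} (hM : IsUnit M)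
    (hRL : ∀ i j, ∀ x ∈ Q, R i (L j x) = M i j • x) : Function.Injective (packingMap Q L) := by
  rw [← LinearMap.ker_eq_bot, LinearMap.ker_eq_bot']
  intro q hq
  have hsum : ∀ k, ∑ j, M k j • (q j : V) = 0 := fun k => by
    simpa [hRL k _ _ (q _).2] using congrArg (R k) ((packingMap_apply Q L q).symm.trans hq)
  funext i
  exact Subtype.ext (congrFun (Matrix.eq_zero_of_forall_sum_smul_eq_zero hM hsum) i)

theorem card_mul_finrank_le_finrank [FiniteDimensional K V] [FiniteDimensional K W]
    {R : ι → W →ₗ[K] V} {M : Matrix ι ι K} (hM : IsUnit M) (hRL : ∀ i j, ∀ x ∈ Q, R i (L j x) = M i j • x) :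
    Fintype.card ι * Module.finrank K Q ≤ Module.finrank K W := by
  have hinj := packingMap_injective hM hRL
  calc Fintype.card ι * Module.finrank K Q = Module.finrank K (ι → Q) := by
        simp [Module.finrank_pi_fintype]
    _ ≤ Module.finrank K W := LinearMap.finrank_le_finrank_of_injective hinj

end Packing

theorem quantum_packing_bound_general
    {H : Type*} [NormedAddCommGroup H] [InnerProductSpace ℂ H]
    [FiniteDimensional ℂ H]
    {n : ℕ} (Q : Submodule ℂ H)
    (P : H →ₗ[ℂ] H)
    (hPproj : P ∘ₗ P = P)
    (hPrange : LinearMap.range P = Q)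
    (L : Fin n → (H →ₗ[ℂ] H))
    (M : Matrix (Fin n) (Fin n) ℂ) (hMinv : IsUnit M)
    (hKL : ∀ i j, P ∘ₗ (LinearMap.adjoint (L i)) ∘ₗ (L j) ∘ₗ P = M i j • P) :
    n * Module.finrank ℂ Q ≤ Module.finrank ℂ H := by
  have hPfix : ∀ x ∈ Q, P x = x := fun x hx =>
    (LinearMap.IsIdempotentElem.mem_range_iff hPproj).mp (hPrange ▸ hx)
  have hRL : ∀ i j, ∀ x ∈ Q, (P ∘ₗ LinearMap.adjoint (L i)) (L j x) = M i j • x := by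
    intro i j x hx
    simpa [hPfix x hx] using LinearMap.congr_fun (hKL i j) x
  simpa using card_mul_finrank_le_finrank hMinv hRL

/-- Quantum packing bound: a nondegenerate code (invertible Knill–Laflamme
    matrix M for n linearly independent errors) satisfies dim H ≥ n · dim Q. -/
theorem quantum_packing_bound
    {H : Type*} [NormedAddCommGroup H] [InnerProductSpace ℂ H]
    [FiniteDimensional ℂ H]
    {n : ℕ} (Q : Submodule ℂ H) (hQ : Q ≠ ⊥)
    (P : H →ₗ[ℂ] H)
    (hPproj : P ∘ₗ P = P)
    (hPsa : LinearMap.adjoint P = P)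
    (hPrange : LinearMap.range P = Q)
    (L : Fin n → (H →ₗ[ℂ] H)) (hL : LinearIndependent ℂ L)
    (M : Matrix (Fin n) (Fin n) ℂ) (hM : M.IsHermitian) (hMinv : IsUnit M)
    (hKL : ∀ i j, P ∘ₗ (LinearMap.adjoint (L i)) ∘ₗ (L j) ∘ₗ P = M i j • P) :
    n * Module.finrank ℂ Q ≤ Module.finrank ℂ H :=
  quantum_packing_bound_general Q P hPproj hPrange L M hMinv hKL
end

section
/- The two-ancilla code for fully correlated triple-Pauli noise on 3 qubits saturates the packing bound: for the code Q = ℂ² ⊗ span{|0⟩⊗|+⟩} ⊆ (ℂ²)^{⊗3} (dim Q = 2) and the four error operators {I, X⊗X⊗X, Y⊗Y⊗Y, Z⊗Z⊗Z}, the Knill–Laflamme condition P_Q L_i† L_j P_Q = M_{ij} P_Q holds with M = I₄ (the 4×4 identity), so the code is nondegenerate and dim H = 8 = dim Q · rank M. -/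
open Matrix
open scoped Kronecker

/-- The Pauli matrices I, X, Y, Z. -/
noncomputable def pauli4 : Fin 4 → Matrix (Fin 2) (Fin 2) ℂ :=
  ![1,
    !![0, 1; 1, 0],
    !![0, -Complex.I; Complex.I, 0],
    !![1, 0; 0, -1]]

/-- The four fully correlated error operators I, X⊗X⊗X, Y⊗Y⊗Y, Z⊗Z⊗Z. -/
noncomputable def tripleErr (a : Fin 4) :
    Matrix (Fin 2 × Fin 2 × Fin 2) (Fin 2 × Fin 2 × Fin 2) ℂ :=
  pauli4 a ⊗ₖ (pauli4 a ⊗ₖ pauli4 a)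

/-- The orthogonal projector onto Q = ℂ² ⊗ span{|0⟩⊗|+⟩}: identity on the
    first qubit tensored with the projectors onto |0⟩ and |+⟩. -/
noncomputable def Pcode : Matrix (Fin 2 × Fin 2 × Fin 2) (Fin 2 × Fin 2 × Fin 2) ℂ :=
  (1 : Matrix (Fin 2) (Fin 2) ℂ) ⊗ₖ
    (!![1, 0; 0, 0] ⊗ₖ !![(1 : ℂ)/2, 1/2; 1/2, 1/2])

/-!
`Pcode = 1 ⊗ |0⟩⟨0| ⊗ |+⟩⟨+|` and `Lᵢ = σᵢ ⊗ σᵢ ⊗ σᵢ` with Hermitian `σᵢ`, so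
`Pcode Lᵢ† Lⱼ Pcode = σᵢσⱼ ⊗ ⟨0|σᵢσⱼ|0⟩|0⟩⟨0| ⊗ ⟨+|σᵢσⱼ|+⟩|+⟩⟨+|`. For `i = j` this is `Pcode`
because `σᵢ² = 1`; for `i ≠ j` one of the two expectations vanishes. The rank of `Pcode` is
`2` since it factors as `B * D` through `ℂ²` with `D * B = 1`.
-/

theorem Matrix.vecMulVec_mul_mul_vecMulVec {R n : Type*} [CommSemiring R] [Fintype n]
    (u w : n → R) (M : Matrix n n R) :
    vecMulVec u w * M * vecMulVec u w = (w ⬝ᵥ M *ᵥ u) • vecMulVec u w := by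
  rw [Matrix.mul_assoc, mul_vecMulVec, vecMulVec_mul_vecMulVec]
  ext
  simp [vecMulVec_apply, mul_left_comm]

theorem Matrix.rank_mul_eq_card_of_mul_eq_one {K m n : Type*} [Field K] [Fintype m]
    [Fintype n] [DecidableEq n] {B : Matrix m n K} {D : Matrix n m K} (h : D * B = 1) :
    (B * D).rank = Fintype.card n := by
  refine le_antisymm ((rank_mul_le_left B D).trans B.rank_le_card_width) ?_
  calc Fintype.card n = (D * (B * D) * B).rank := by
        rw [← Matrix.mul_assoc, h, Matrix.one_mul, h, rank_one]
    _ ≤ (B * D).rank := (rank_mul_le_left _ _).trans (rank_mul_le_right _ _)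

theorem pauli4_conjTranspose (a : Fin 4) : (pauli4 a)ᴴ = pauli4 a := by
  fin_cases a <;> ext i j <;> fin_cases i <;> fin_cases j <;> simp [pauli4]

theorem pauli4_mul_self (a : Fin 4) : pauli4 a * pauli4 a = 1 := by
  fin_cases a <;> ext i j <;> fin_cases i <;> fin_cases j <;> simp [pauli4, one_fin_two]

theorem tripleErr_conjTranspose (a : Fin 4) : (tripleErr a)ᴴ = tripleErr a := by
  simp only [tripleErr, conjTranspose_kronecker, pauli4_conjTranspose]

theorem Pcode_eq_kronecker_vecMulVec :
    Pcode = 1 ⊗ₖ (vecMulVec ![1, 0] ![1, 0] ⊗ₖ vecMulVec ![1, 1] ![1 / 2, 1 / 2]) := by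
  rw [Pcode]
  congr 2 <;> ext i j <;> fin_cases i <;> fin_cases j <;> simp [vecMulVec_apply]

/- For `i ≠ j`, `σᵢσⱼ` is a phase times a Pauli `σₖ ≠ 1`; `⟨0|σₖ|0⟩` vanishes for `X, Y`
and `⟨+|σₖ|+⟩` for `Y, Z`. -/
theorem pauli4_mul_expectation_zero_mul_expectation_plus (i j : Fin 4) :
    (![1, 0] ⬝ᵥ (pauli4 i * pauli4 j) *ᵥ ![1, 0]) *
      (![1 / 2, 1 / 2] ⬝ᵥ (pauli4 i * pauli4 j) *ᵥ ![1, 1])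
      = (1 : Matrix (Fin 4) (Fin 4) ℂ) i j := by
  fin_cases i <;> fin_cases j <;> norm_num [pauli4, one_apply, vecHead, vecTail]

theorem Pcode_rank : Pcode.rank = 2 := by
  have hfactor : Pcode =
      ((1 : Matrix (Fin 2) (Fin 2) ℂ) ⊗ₖ
        (replicateCol Unit ![1, 0] ⊗ₖ replicateCol Unit ![1, 1])) *
      ((1 : Matrix (Fin 2) (Fin 2) ℂ) ⊗ₖ
        (replicateRow Unit ![1, 0] ⊗ₖ replicateRow Unit ![1 / 2, 1 / 2])) := by
    rw [Pcode_eq_kronecker_vecMulVec, ← mul_kronecker_mul, ← mul_kronecker_mul, Matrix.one_mul,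
      ← vecMulVec_eq, ← vecMulVec_eq]
  rw [hfactor, rank_mul_eq_card_of_mul_eq_one]
  · rfl
  · rw [← mul_kronecker_mul, ← mul_kronecker_mul, Matrix.one_mul, replicateRow_mul_replicateCol,
      replicateRow_mul_replicateCol]
    ext
    norm_num [one_apply, Prod.ext_iff]

theorem Pcode_mul_tripleErr_conjTranspose_mul_tripleErr_mul_Pcode (i j : Fin 4) :
    Pcode * (tripleErr i)ᴴ * tripleErr j * Pcode =
      ((![1, 0] ⬝ᵥ (pauli4 i * pauli4 j) *ᵥ ![1, 0]) *
        (![1 / 2, 1 / 2] ⬝ᵥ (pauli4 i * pauli4 j) *ᵥ ![1, 1])) •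
      (pauli4 i * pauli4 j) ⊗ₖ
        (vecMulVec ![1, 0] ![1, 0] ⊗ₖ vecMulVec ![1, 1] ![1 / 2, 1 / 2]) := by
  rw [tripleErr_conjTranspose, Pcode_eq_kronecker_vecMulVec]
  simp only [tripleErr, ← mul_kronecker_mul, Matrix.one_mul, Matrix.mul_one]
  rw [Matrix.mul_assoc (vecMulVec _ _) (pauli4 i), Matrix.mul_assoc (vecMulVec _ _) (pauli4 i),
    vecMulVec_mul_mul_vecMulVec, vecMulVec_mul_mul_vecMulVec]
  simp only [smul_kronecker, kronecker_smul, smul_smul]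
  rw [mul_comm (![1 / 2, 1 / 2] ⬝ᵥ _)]

/-- The two-ancilla code for fully correlated triple-Pauli noise saturates the
    quantum packing bound: the Knill–Laflamme matrix is the 4×4 identity (so
    the code is nondegenerate), dim Q = 2, and dim H = 8 = dim Q · rank M. -/
theorem ancilla_code_saturates_packing_bound :
    (∀ i j : Fin 4, Pcode * (tripleErr i)ᴴ * tripleErr j * Pcode
      = (1 : Matrix (Fin 4) (Fin 4) ℂ) i j • Pcode) ∧
    Pcode.rank = 2 ∧
    Fintype.card (Fin 2 × Fin 2 × Fin 2)
      = Pcode.rank * (1 : Matrix (Fin 4) (Fin 4) ℂ).rank := by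
  refine ⟨fun i j => ?_, Pcode_rank, by rw [Pcode_rank, rank_one]; rfl⟩
  rw [Pcode_mul_tripleErr_conjTranspose_mul_tripleErr_mul_Pcode,
    pauli4_mul_expectation_zero_mul_expectation_plus]
  obtain rfl | hij := eq_or_ne i j
  · rw [pauli4_mul_self, Pcode_eq_kronecker_vecMulVec]
  · rw [one_apply_ne hij, zero_smul, zero_smul]
end
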